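/- Fix δ > 0. There exist constants κ > 0 and C > 0 such that for all sufficiently large T ∈ 2ℕ, |φ(δ,T) − φ(δ,∞)| ≤ C e^{−κ T}, where φ(δ,T) := λ_{δ,T} is the unique solution of Q_T(λ) = e^{−δ} and φ(δ,∞) := δ/2 − log √(2 − e^{−δ}) is the unique λ ≥ 0 with 1 − √(1 − e^{−2λ}) = e^{−δ}. In particular, φ(δ,T) − φ(δ,∞) = o(1/T) as T → ∞. -/

import Mathlib

open MeasureTheory ProbabilityTheory Filter Real Topology
open scoped ENNReal NNReal

noncomputable section

/-- The simple random walk: partial sums of the steps `X` (so `walk X 0 ω = 0`). -/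
def walk {Ω : Type*} (X : ℕ → Ω → ℤ) (n : ℕ) (ω : Ω) : ℤ := ∑ i ∈ Finset.range n, X i ω

/-- `P` together with the steps `X` is a simple symmetric random walk: `P` is a probability
measure and the steps are i.i.d. with `P(X i = 1) = P(X i = -1) = 1/2`. -/
def IsSRW {Ω : Type*} [MeasurableSpace Ω] (P : Measure Ω) (X : ℕ → Ω → ℤ) : Prop :=
  IsProbabilityMeasure P ∧ (∀ i, Measurable (X i)) ∧
    iIndepFun X P ∧
    (∀ i, P {ω | X i ω = 1} = 1 / 2) ∧ (∀ i, P {ω | X i ω = -1} = 1 / 2)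

/-- First hitting time `τ₁^T` of `T·ℤ` by the walk, with the convention that `T = 0`
encodes `T = ∞` (since `(0 : ℤ) ∣ m ↔ m = 0`, i.e. `0·ℤ = {0}`); junk value
`sInf ∅ = 0` if the walk never hits `T·ℤ`. -/
def hitT {Ω : Type*} (X : ℕ → Ω → ℤ) (T : ℕ) (ω : Ω) : ℕ :=
  sInf {n | 0 < n ∧ (T : ℤ) ∣ walk X n ω}

/-- `q_T(n) = P(τ₁^T = n)`. -/
def qFun {Ω : Type*} [MeasurableSpace Ω] (P : Measure Ω) (X : ℕ → Ω → ℤ) (T n : ℕ) : ℝ :=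
  (P {ω | hitT X T ω = n}).toReal

/-- `q_T^j(n) = P(τ₁^T = n, S_{τ₁^T} = jT)`. -/
def qjFun {Ω : Type*} [MeasurableSpace Ω] (P : Measure Ω) (X : ℕ → Ω → ℤ) (T : ℕ) (j : ℤ)
    (n : ℕ) : ℝ :=
  (P {ω | hitT X T ω = n ∧ walk X n ω = j * T}).toReal

/-- The Laplace transform `Q_T(λ) = E[e^{-λ τ₁^T}] = ∑_{n ≥ 1} e^{-λ n} P(τ₁^T = n)`,
with values in `[0,∞]`. -/
def QT {Ω : Type*} [MeasurableSpace Ω] (P : Measure Ω) (X : ℕ → Ω → ℤ) (T : ℕ) (l : ℝ) :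
    ℝ≥0∞ :=
  ∑' n : ℕ, ENNReal.ofReal (Real.exp (-l * (n + 1))) * P {ω | hitT X T ω = n + 1}

/-- `φ(δ,∞) = δ/2 - log √(2 - e^{-δ})`. -/
def phiInf (δ : ℝ) : ℝ := δ / 2 - Real.log (Real.sqrt (2 - Real.exp (-δ)))

/-!
Counting `±1` paths, `P(τ₁^T = n + 1) = 2^{-(n+1)} (u_T(1, n) + u_T(-1, n))`, where `u_T(x, n)`
counts the paths from `x` that first hit `Tℤ` at time `n`. With `s = e^{-λ}/2`, the generating
function `F(x) = ∑ₙ sⁿ u_T(x, n)` equals `1` on `Tℤ` and `s (F(x+1) + F(x-1))` off it, so by the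
discrete maximum principle (`2s < 1`) it is `(ρ^x + ρ^{T-x}) / (1 + ρ^T)` on `[0, T]`, where
`ρ = e^λ - √(e^{2λ} - 1) < 1` solves `s (1 + ρ²) = ρ`. Hence
`Q_T(λ) = e^{-λ}(ρ + ρ^{T-1})/(1 + ρ^T)` exceeds `Q_∞(λ) = e^{-λ} ρ` by a positive amount at most
`ρ^{T-1}`. Since `Q_T` is antitone, this gives `φ(δ,∞) ≤ φ(δ,T)`, and then
`Q_∞(φ(δ,∞)) - Q_∞(φ(δ,T)) ≤ ρ(φ(δ,∞))^{T-1}`; as `Q_∞` decreases at rate at least `e^{-2λ}`,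
`φ(δ,T) - φ(δ,∞) = O(ρ(φ(δ,∞))^T)`.
-/

open Finset

def stepOf (b : Bool) : ℤ := if b then 1 else -1

lemma stepOf_decide_eq {v : ℤ} (hv : v = 1 ∨ v = -1) : stepOf (decide (v = 1)) = v := by
  rcases hv with rfl | rfl <;> simp [stepOf]

def pathSum {m : ℕ} (ε : Fin m → Bool) (k : ℕ) : ℤ :=
  ∑ j ∈ range k, if h : j < m then stepOf (ε ⟨j, h⟩) else 0

lemma pathSum_cons_succ {m : ℕ} (b : Bool) (ε : Fin m → Bool) (k : ℕ) :
    pathSum (Fin.cons b ε) (k + 1) = stepOf b + pathSum ε k := by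
  rw [pathSum, sum_range_succ', add_comm]
  simp only [pathSum, Nat.succ_lt_succ_iff, Nat.zero_lt_succ, dif_pos]
  rfl

@[simp]
lemma pathSum_zero {m : ℕ} (ε : Fin m → Bool) : pathSum ε 0 = 0 := rfl

def FirstHit (T : ℕ) (s : ℕ → ℤ) (n : ℕ) : Prop :=
  (T : ℤ) ∣ s n ∧ ∀ k < n, ¬ (T : ℤ) ∣ s k

instance (T : ℕ) (s : ℕ → ℤ) (n : ℕ) : Decidable (FirstHit T s n) := by
  unfold FirstHit; infer_instance

lemma firstHit_congr {T : ℕ} {s s' : ℕ → ℤ} {n : ℕ} (h : ∀ k ≤ n, s k = s' k) :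
    FirstHit T s n ↔ FirstHit T s' n := by
  simp only [FirstHit, h n le_rfl]
  exact and_congr_right fun _ => forall₂_congr fun k hk => by rw [h k hk.le]

lemma firstHit_zero_iff {T : ℕ} {s : ℕ → ℤ} : FirstHit T s 0 ↔ (T : ℤ) ∣ s 0 := by
  simp [FirstHit]

lemma firstHit_succ_iff {T : ℕ} {s : ℕ → ℤ} {n : ℕ} :
    FirstHit T s (n + 1) ↔ ¬ (T : ℤ) ∣ s 0 ∧ FirstHit T (fun k => s (k + 1)) n := by
  simp only [FirstHit, Nat.forall_lt_succ_left']
  tauto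

/-- The number of `±1` paths of length `n` from `x` that first hit `T ℤ` at time `n`
(see `card_firstHit_add_pathSum`). -/
def firstPassageCount (T : ℕ) (x : ℤ) : ℕ → ℕ
  | 0 => if (T : ℤ) ∣ x then 1 else 0
  | n + 1 => if (T : ℤ) ∣ x then 0 else
      firstPassageCount T (x + 1) n + firstPassageCount T (x - 1) n

lemma firstPassageCount_le (T : ℕ) (x : ℤ) (n : ℕ) : firstPassageCount T x n ≤ 2 ^ n := by
  induction n generalizing x with
  | zero => simp only [firstPassageCount]; split <;> simp
  | succ n ih =>
    simp only [firstPassageCount]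
    split
    · positivity
    · grind

lemma firstPassageCount_add_period (T : ℕ) (x : ℤ) (n : ℕ) :
    firstPassageCount T (x + T) n = firstPassageCount T x n := by
  induction n generalizing x with
  | zero => simp [firstPassageCount]
  | succ n ih =>
    simp only [firstPassageCount, dvd_add_self_right]
    rw [add_right_comm, ih, ← ih (x - 1), sub_add_eq_add_sub]

lemma card_filter_fin_succ {n : ℕ} (p : (Fin (n + 1) → Bool) → Prop) [DecidablePred p] :
    #{ε | p ε} = ∑ b, #{t : Fin n → Bool | p (Fin.cons b t)} := by
  simp only [card_filter]
  rw [← Fintype.sum_equiv (Fin.consEquiv fun _ => Bool) _ _ fun _ => rfl,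
    Fintype.sum_prod_type]
  rfl

lemma card_firstHit_add_pathSum (T : ℕ) (n : ℕ) (x : ℤ) :
    #{t : Fin n → Bool | FirstHit T (fun k => x + pathSum t k) n} = firstPassageCount T x n := by
  induction n generalizing x with
  | zero => simp only [firstHit_zero_iff, pathSum_zero, firstPassageCount]; split <;> simp [*]
  | succ n ih =>
    rw [card_filter_fin_succ]
    simp only [firstHit_succ_iff, pathSum_zero, add_zero, pathSum_cons_succ, ← add_assoc]
    by_cases hx : (T : ℤ) ∣ x
    · simp [hx, firstPassageCount]
    · simp only [hx, not_false_eq_true, true_and, ih, Fintype.sum_bool, firstPassageCount,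
        if_false, stepOf, if_true, Bool.false_eq_true, ← sub_eq_add_neg]

lemma card_firstHit_pathSum_succ (T n : ℕ) :
    #{ε : Fin (n + 1) → Bool | FirstHit T (fun k => pathSum ε (k + 1)) n} =
      firstPassageCount T 1 n + firstPassageCount T (-1) n := by
  simp only [card_filter_fin_succ, pathSum_cons_succ, Fintype.sum_bool, stepOf, if_true,
    Bool.false_eq_true, if_false, card_firstHit_add_pathSum]

section Walk

variable {Ω : Type*} {X : ℕ → Ω → ℤ}

lemma hitT_eq_succ_iff (T n : ℕ) (ω : Ω) :
    hitT X T ω = n + 1 ↔ FirstHit T (fun k => walk X (k + 1) ω) n := by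
  constructor
  · intro h
    have hne : {k | 0 < k ∧ (T : ℤ) ∣ walk X k ω}.Nonempty :=
      Set.nonempty_iff_ne_empty.2 fun hempty => by simp [hitT, hempty] at h
    have hmem : hitT X T ω ∈ _ := Nat.sInf_mem hne
    rw [h] at hmem
    refine ⟨hmem.2, fun k hk hdvd => ?_⟩
    exact Nat.notMem_of_lt_sInf (h ▸ Nat.succ_lt_succ hk : k + 1 < hitT X T ω) ⟨k.succ_pos, hdvd⟩
  · rintro ⟨hdvd, hbefore⟩
    refine IsLeast.csInf_eq ⟨⟨n.succ_pos, hdvd⟩, ?_⟩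
    rintro (_ | k) ⟨hk, hkdvd⟩
    · exact absurd hk (lt_irrefl 0)
    · by_contra! hlt
      exact hbefore k (by omega) hkdvd

def signPath (X : ℕ → Ω → ℤ) (m : ℕ) (ω : Ω) : Fin m → Bool := fun i => decide (X i ω = 1)

lemma walk_eq_pathSum_signPath {ω : Ω} (hω : ∀ i, X i ω = 1 ∨ X i ω = -1) {m k : ℕ}
    (hk : k ≤ m) : walk X k ω = pathSum (signPath X m ω) k := by
  refine sum_congr rfl fun j hj => ?_
  rw [dif_pos (by simp at hj; omega)]
  exact (stepOf_decide_eq (hω j)).symm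

lemma signPath_preimage_singleton (m : ℕ) (ε : Fin m → Bool) :
    signPath X m ⁻¹' {ε} = ⋂ i : Fin m, X i ⁻¹' {v | decide (v = 1) = ε i} := by
  ext ω
  simp [signPath, funext_iff]

namespace IsSRW

variable [MeasurableSpace Ω] {P : Measure Ω} (hP : IsSRW P X)
include hP

lemma ae_step_eq_one_or_neg_one : ∀ᵐ ω ∂P, ∀ i, X i ω = 1 ∨ X i ω = -1 := by
  have := hP.1
  refine ae_all_iff.2 fun i => ?_
  have hdisj : Disjoint {ω | X i ω = 1} {ω | X i ω = -1} :=
    Set.disjoint_left.2 fun ω h1 h2 => by simp_all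
  have hmeas : NullMeasurableSet {ω | X i ω = 1 ∨ X i ω = -1} P :=
    (hP.2.1 i (MeasurableSet.of_discrete (s := {v | v = 1 ∨ v = -1}))).nullMeasurableSet
  rw [ae_iff_measure_eq hmeas, Set.ofPred_or,
    measure_union hdisj (hP.2.1 i (measurableSet_singleton _)), hP.2.2.2.1 i, hP.2.2.2.2 i,
    ENNReal.add_halves, measure_univ]

lemma measure_decide_step_eq (i : ℕ) (b : Bool) :
    P (X i ⁻¹' {v | decide (v = 1) = b}) = 2⁻¹ := by
  have := hP.1
  have hup : P (X i ⁻¹' {1}) = 2⁻¹ := by rw [← one_div]; exact hP.2.2.2.1 i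
  cases b
  · have hdown : X i ⁻¹' {v | decide (v = 1) = false} = (X i ⁻¹' {1})ᶜ := by ext; simp
    rw [hdown, prob_compl_eq_one_sub (hP.2.1 i (measurableSet_singleton 1)), hup,
      ENNReal.one_sub_inv_two]
  · simpa using hup

lemma measure_signPath_eq (m : ℕ) (ε : Fin m → Bool) :
    P (signPath X m ⁻¹' {ε}) = 2⁻¹ ^ m := by
  rw [signPath_preimage_singleton, (hP.2.2.1.precomp Fin.val_injective).meas_iInter
    fun i => ⟨_, MeasurableSet.of_discrete, rfl⟩]
  simp only [hP.measure_decide_step_eq, prod_const, card_univ, Fintype.card_fin]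

lemma measure_signPath_mem (m : ℕ) (A : Finset (Fin m → Bool)) :
    P (signPath X m ⁻¹' A) = #A * 2⁻¹ ^ m := by
  rw [← sum_measure_preimage_singleton A fun ε _ => ?_]
  · simp [hP.measure_signPath_eq]
  · rw [signPath_preimage_singleton]
    exact MeasurableSet.iInter fun i => hP.2.1 i MeasurableSet.of_discrete

lemma measure_hitT_eq_succ (T n : ℕ) :
    P {ω | hitT X T ω = n + 1} =
      (firstPassageCount T 1 n + firstPassageCount T (-1) n : ℕ) * 2⁻¹ ^ (n + 1) := by
  rw [← card_firstHit_pathSum_succ, ← hP.measure_signPath_mem]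
  refine measure_congr ?_
  filter_upwards [hP.ae_step_eq_one_or_neg_one] with ω hω
  refine propext ((hitT_eq_succ_iff T n ω).trans ?_)
  change _ ↔ signPath X (n + 1) ω ∈ (filter _ univ : Finset _)
  rw [mem_filter]
  simp only [mem_univ, true_and]
  exact firstHit_congr fun k hk => walk_eq_pathSum_signPath hω (by omega)

end IsSRW

end Walk

section GeneratingFunction

variable {T : ℕ} {s : ℝ}

def firstPassageGF (T : ℕ) (s : ℝ) (x : ℤ) : ℝ := ∑' n, s ^ n * firstPassageCount T x n

lemma summable_firstPassageGF (hs0 : 0 ≤ s) (hs : 2 * s < 1) (x : ℤ) :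
    Summable fun n => s ^ n * (firstPassageCount T x n : ℝ) := by
  refine Summable.of_nonneg_of_le (fun n => by positivity) (fun n => ?_)
    (summable_geometric_of_lt_one (by positivity) hs)
  calc s ^ n * (firstPassageCount T x n : ℝ) ≤ s ^ n * 2 ^ n := by
        gcongr; exact_mod_cast firstPassageCount_le T x n
    _ = (2 * s) ^ n := by ring

lemma firstPassageGF_of_dvd {x : ℤ} (hx : (T : ℤ) ∣ x) : firstPassageGF T s x = 1 := by
  rw [firstPassageGF, tsum_eq_single 0]
  · simp [firstPassageCount, hx]
  · rintro (_ | n) hn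
    · exact absurd rfl hn
    · simp [firstPassageCount, hx]

lemma firstPassageGF_of_not_dvd (hs0 : 0 ≤ s) (hs : 2 * s < 1) {x : ℤ} (hx : ¬ (T : ℤ) ∣ x) :
    firstPassageGF T s x = s * (firstPassageGF T s (x + 1) + firstPassageGF T s (x - 1)) := by
  rw [firstPassageGF, (summable_firstPassageGF hs0 hs x).tsum_eq_zero_add, firstPassageGF,
    firstPassageGF, ← (summable_firstPassageGF hs0 hs _).tsum_add
      (summable_firstPassageGF hs0 hs _), ← tsum_mul_left]
  simp only [firstPassageCount, hx, if_false, Nat.cast_zero, mul_zero, zero_add, Nat.cast_add]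
  congr 1 with n
  ring

lemma firstPassageGF_add_period (x : ℤ) :
    firstPassageGF T s (x + T) = firstPassageGF T s x := by
  simp only [firstPassageGF, firstPassageCount_add_period]

lemma eq_zero_of_eq_mul_add_of_boundary {f : ℕ → ℝ} (hs0 : 0 ≤ s) (hs : 2 * s < 1)
    (h0 : f 0 = 0) (hT : f T = 0) (hf : ∀ x, 0 < x → x < T → f x = s * (f (x + 1) + f (x - 1)))
    {x : ℕ} (hx : x ≤ T) : f x = 0 := by
  obtain ⟨x₀, hx₀, hmax⟩ := (range (T + 1)).exists_max_image (fun x => |f x|) ⟨0, by simp⟩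
  simp only [mem_range, Nat.lt_succ_iff] at hx₀ hmax
  have hle : |f x₀| ≤ 2 * s * |f x₀| := by
    by_cases hint : 0 < x₀ ∧ x₀ < T
    · calc |f x₀| = s * |f (x₀ + 1) + f (x₀ - 1)| := by
            rw [hf x₀ hint.1 hint.2, abs_mul, abs_of_nonneg hs0]
        _ ≤ s * (|f x₀| + |f x₀|) := by
            gcongr
            exact (abs_add_le _ _).trans (add_le_add (hmax _ (by omega)) (hmax _ (by omega)))
        _ = 2 * s * |f x₀| := by ring
    · obtain rfl | rfl : x₀ = 0 ∨ x₀ = T := by omega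
      · simp [h0]
      · simp [hT]
  have hzero : |f x₀| = 0 := by nlinarith [abs_nonneg (f x₀)]
  exact abs_nonpos_iff.1 (hzero ▸ hmax x hx)

lemma firstPassageGF_natCast_eq (hs0 : 0 ≤ s) (hs : 2 * s < 1) {r : ℝ} (hr : 0 ≤ r)
    (hsr : s * (1 + r ^ 2) = r) {x : ℕ} (hx : x ≤ T) :
    firstPassageGF T s x = (r ^ x + r ^ (T - x)) / (1 + r ^ T) := by
  have hpos : 0 < 1 + r ^ T := by positivity
  set g : ℕ → ℝ := fun x => (r ^ x + r ^ (T - x)) / (1 + r ^ T)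
  have hg : ∀ x, 0 < x → x < T → g x = s * (g (x + 1) + g (x - 1)) := by
    intro x h0 hxT
    obtain ⟨a, rfl⟩ : ∃ a, x = a + 1 := ⟨x - 1, by omega⟩
    obtain ⟨b, rfl⟩ : ∃ b, T = a + b + 2 := ⟨T - a - 2, by omega⟩
    simp only [g, show a + b + 2 - (a + 1) = b + 1 by omega,
      show a + b + 2 - (a + 1 + 1) = b by omega, Nat.add_sub_cancel,
      show a + b + 2 - a = b + 2 by omega]
    rw [← add_div, mul_div_assoc']
    congr 1
    linear_combination (-(r ^ a + r ^ b)) * hsr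
  have hdiff := eq_zero_of_eq_mul_add_of_boundary (f := fun x => firstPassageGF T s x - g x)
    hs0 hs ?_ ?_ ?_ hx
  · exact sub_eq_zero.1 hdiff
  · simp [g, firstPassageGF_of_dvd, hpos.ne']
  · simp [g, firstPassageGF_of_dvd, add_comm (r ^ T), hpos.ne']
  · intro x h0 hxT
    have hndvd : ¬ (T : ℤ) ∣ x := by exact_mod_cast Nat.not_dvd_of_pos_of_lt h0 hxT
    rw [firstPassageGF_of_not_dvd hs0 hs hndvd, hg x h0 hxT, Nat.cast_add_one, Nat.cast_pred h0]
    ring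

end GeneratingFunction

section Rates

variable {l l' δ : ℝ}

def rho (l : ℝ) : ℝ := exp l - √(exp l ^ 2 - 1)

lemma exp_sq_sub_one_nonneg (hl : 0 ≤ l) : 0 ≤ exp l ^ 2 - 1 := by
  nlinarith [one_le_exp hl]

lemma rho_eq_inv (hl : 0 ≤ l) : rho l = (exp l + √(exp l ^ 2 - 1))⁻¹ :=
  eq_inv_of_mul_eq_one_left <| by
    rw [rho]; linear_combination -(sq_sqrt (exp_sq_sub_one_nonneg hl))

lemma rho_pos (hl : 0 ≤ l) : 0 < rho l := by
  rw [rho_eq_inv hl]; positivity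

lemma rho_lt_one (hl : 0 < l) : rho l < 1 := by
  rw [rho_eq_inv hl.le]
  exact inv_lt_one_of_one_lt₀ (lt_add_of_lt_of_nonneg (one_lt_exp_iff.2 hl) (sqrt_nonneg _))

lemma rho_antitoneOn : AntitoneOn rho (Set.Ici 0) := by
  intro l hl l' _ hll'
  rw [rho_eq_inv hl, rho_eq_inv (hl.out.trans hll')]
  gcongr

lemma exp_neg_div_two_mul_one_add_rho_sq (hl : 0 ≤ l) :
    exp (-l) / 2 * (1 + rho l ^ 2) = rho l := by
  have hquad : rho l ^ 2 + 1 = 2 * exp l * rho l := by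
    rw [rho]; linear_combination sq_sqrt (exp_sq_sub_one_nonneg hl)
  rw [add_comm, hquad, exp_neg]
  field_simp

def Qinf (l : ℝ) : ℝ := 1 - √(1 - exp (-(2 * l)))

lemma Qinf_eq_exp_neg_mul_rho (l : ℝ) : Qinf l = exp (-l) * rho l := by
  have hsq : exp (-l) ^ 2 * (exp l ^ 2 - 1) = 1 - exp (-(2 * l)) := by
    rw [mul_sub, mul_one, ← mul_pow, ← exp_add, neg_add_cancel, exp_zero, one_pow,
      ← exp_nat_mul]
    push_cast
    ring_nf
  rw [Qinf, rho, mul_sub, ← hsq, sqrt_mul (by positivity), sqrt_sq (exp_pos _).le,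
    ← exp_add, neg_add_cancel, exp_zero]

lemma exp_neg_two_mul_phiInf (hδ : 0 ≤ δ) :
    exp (-(2 * phiInf δ)) = 1 - (1 - exp (-δ)) ^ 2 := by
  have h2 : 0 < 2 - exp (-δ) := by linarith [exp_le_one_iff.2 (neg_nonpos.2 hδ)]
  rw [phiInf, log_sqrt h2.le, show -(2 * (δ / 2 - log (2 - exp (-δ)) / 2)) =
    -δ + log (2 - exp (-δ)) by ring, exp_add, exp_log h2]
  ring

lemma Qinf_phiInf (hδ : 0 ≤ δ) : Qinf (phiInf δ) = exp (-δ) := by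
  rw [Qinf, exp_neg_two_mul_phiInf hδ, sub_sub_cancel,
    sqrt_sq (by linarith [exp_le_one_iff.2 (neg_nonpos.2 hδ)]), sub_sub_cancel]

lemma phiInf_pos (hδ : 0 < δ) : 0 < phiInf δ := by
  have hne : 1 - exp (-δ) ≠ 0 := sub_ne_zero.2 (exp_lt_one_iff.2 (neg_neg_of_pos hδ)).ne'
  have hlt : exp (-(2 * phiInf δ)) < 1 := by
    have : 0 < (1 - exp (-δ)) ^ 2 := by positivity
    linarith [exp_neg_two_mul_phiInf hδ.le]
  linarith [exp_lt_one_iff.1 hlt]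

lemma sqrt_sub_sqrt_ge {a b : ℝ} (ha : 0 ≤ a) (hab : a ≤ b) (hb : b ≤ 1) :
    (b - a) / 2 ≤ √b - √a := by
  have hsum : √b + √a ≤ 2 := by
    linarith [sqrt_le_one.2 hb, sqrt_le_one.2 (hab.trans hb)]
  have hdiff : 0 ≤ √b - √a := sub_nonneg.2 (sqrt_le_sqrt hab)
  nlinarith [sq_sqrt ha, sq_sqrt (ha.trans hab), mul_le_mul_of_nonneg_left hsum hdiff]

lemma Qinf_sub_Qinf_ge (hl : 0 ≤ l) (hll' : l ≤ l') :
    (exp (-(2 * l)) - exp (-(2 * l'))) / 2 ≤ Qinf l - Qinf l' := by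
  have h1 : exp (-(2 * l')) ≤ exp (-(2 * l)) := exp_le_exp.2 (by linarith)
  have h2 : exp (-(2 * l)) ≤ 1 := exp_le_one_iff.2 (by linarith)
  have := sqrt_sub_sqrt_ge (a := 1 - exp (-(2 * l))) (b := 1 - exp (-(2 * l'))) (by linarith)
    (by linarith) (by linarith [exp_pos (-(2 * l'))])
  rw [Qinf, Qinf]
  linarith

def QTformula (l : ℝ) (T : ℕ) : ℝ := exp (-l) * (rho l + rho l ^ (T - 1)) / (1 + rho l ^ T)

lemma QTformula_pos (hl : 0 ≤ l) (T : ℕ) : 0 < QTformula l T := by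
  have := rho_pos hl
  unfold QTformula
  positivity

lemma QTformula_sub_Qinf (hl : 0 ≤ l) {T : ℕ} (hT : 0 < T) :
    QTformula l T - Qinf l = exp (-l) * rho l ^ (T - 1) * (1 - rho l ^ 2) / (1 + rho l ^ T) := by
  obtain ⟨m, rfl⟩ : ∃ m, T = m + 1 := ⟨T - 1, by omega⟩
  have hpos : 0 < 1 + rho l ^ (m + 1) := by have := rho_pos hl; positivity
  rw [QTformula, Qinf_eq_exp_neg_mul_rho, Nat.add_sub_cancel]
  field_simp
  ring

lemma Qinf_lt_QTformula (hl : 0 < l) {T : ℕ} (hT : 0 < T) : Qinf l < QTformula l T := by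
  have h0 := rho_pos hl.le
  have h1 : 0 < 1 - rho l ^ 2 := by nlinarith [rho_lt_one hl]
  have hdiff := QTformula_sub_Qinf hl.le hT
  have hpos : 0 < exp (-l) * rho l ^ (T - 1) * (1 - rho l ^ 2) / (1 + rho l ^ T) := by
    positivity
  linarith

lemma QTformula_le_Qinf_add (hl : 0 < l) {T : ℕ} (hT : 0 < T) :
    QTformula l T ≤ Qinf l + rho l ^ (T - 1) := by
  have h0 := rho_pos hl.le
  have h1 : 0 ≤ 1 - rho l ^ 2 := by nlinarith [rho_lt_one hl]
  have h2 : exp (-l) * (1 - rho l ^ 2) ≤ 1 := by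
    nlinarith [exp_le_one_iff.2 (neg_nonpos.2 hl.le), exp_pos (-l), sq_nonneg (rho l)]
  have h3 : 1 ≤ 1 + rho l ^ T := by have := pow_pos h0 T; linarith
  rw [← sub_le_iff_le_add', QTformula_sub_Qinf hl.le hT, div_le_iff₀ (by linarith)]
  have h4 := pow_pos h0 (T - 1)
  nlinarith

lemma le_of_one_sub_le_exp_neg_two_mul {d η : ℝ} (hd : 0 ≤ d) (hη : η ≤ 1 / 2)
    (h : 1 - η ≤ exp (-(2 * d))) : d ≤ η := by
  have hexp : exp (-(2 * d)) * exp (2 * d) = 1 := by rw [← exp_add, neg_add_cancel, exp_zero]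
  have hgrowth : 1 + 2 * d ≤ exp (2 * d) := by linarith [add_one_le_exp (2 * d)]
  nlinarith [mul_le_mul_of_nonneg_left hgrowth (by linarith : (0 : ℝ) ≤ 1 - η),
    mul_le_mul_of_nonneg_right h (exp_pos (2 * d)).le]

end Rates

section Laplace

variable {Ω : Type*} [MeasurableSpace Ω] {P : Measure Ω} {X : ℕ → Ω → ℤ} {T : ℕ} {l δ : ℝ}

lemma QT_antitone (P : Measure Ω) (X : ℕ → Ω → ℤ) (T : ℕ) : Antitone (QT P X T) := by
  intro l l' hll'
  refine ENNReal.tsum_le_tsum fun n =>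
    mul_le_mul_left (ENNReal.ofReal_le_ofReal (exp_le_exp.2 ?_)) _
  have : (0 : ℝ) ≤ n + 1 := by positivity
  nlinarith

lemma exp_neg_div_two_bounds (hl : 0 < l) : 0 ≤ exp (-l) / 2 ∧ 2 * (exp (-l) / 2) < 1 := by
  refine ⟨by positivity, ?_⟩
  rw [mul_div_cancel₀ _ two_ne_zero]
  exact exp_lt_one_iff.2 (neg_neg_of_pos hl)

namespace IsSRW

variable (hP : IsSRW P X)
include hP

lemma QT_eq_tsum (T : ℕ) (l : ℝ) :
    QT P X T l = ∑' n : ℕ, ENNReal.ofReal ((exp (-l) / 2) ^ (n + 1) *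
      (firstPassageCount T 1 n + firstPassageCount T (-1) n : ℕ)) := by
  refine tsum_congr fun n => ?_
  set k := firstPassageCount T 1 n + firstPassageCount T (-1) n
  have hreal : (exp (-l) / 2) ^ (n + 1) * (k : ℝ) = exp (-l * (n + 1)) * (k * 2⁻¹ ^ (n + 1)) := by
    rw [div_pow, inv_pow, ← exp_nat_mul]
    push_cast
    ring_nf
  rw [hP.measure_hitT_eq_succ, hreal, ENNReal.ofReal_mul (exp_pos _).le,
    ENNReal.ofReal_mul (by positivity), ENNReal.ofReal_natCast, ENNReal.ofReal_pow (by norm_num),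
    ENNReal.ofReal_inv_of_pos two_pos, ENNReal.ofReal_ofNat]

lemma QT_eq_ofReal_firstPassageGF (hl : 0 < l) :
    QT P X T l = ENNReal.ofReal (exp (-l) / 2 *
      (firstPassageGF T (exp (-l) / 2) 1 + firstPassageGF T (exp (-l) / 2) (-1))) := by
  obtain ⟨hs0, hs⟩ := exp_neg_div_two_bounds hl
  have hsum := ((summable_firstPassageGF (T := T) hs0 hs 1).add
    (summable_firstPassageGF (T := T) hs0 hs (-1))).mul_left (exp (-l) / 2)
  rw [hP.QT_eq_tsum, ← ENNReal.ofReal_tsum_of_nonneg (fun n => by positivity)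
    (hsum.congr fun n => by push_cast; ring), firstPassageGF, firstPassageGF,
    ← (summable_firstPassageGF hs0 hs 1).tsum_add (summable_firstPassageGF hs0 hs (-1)),
    ← tsum_mul_left]
  congr 2 with n
  push_cast
  ring

lemma QT_eq_ofReal_QTformula (hl : 0 < l) (hT : 0 < T) :
    QT P X T l = ENNReal.ofReal (QTformula l T) := by
  obtain ⟨hs0, hs⟩ := exp_neg_div_two_bounds hl
  have hr := (rho_pos hl.le).le
  have hsr := exp_neg_div_two_mul_one_add_rho_sq hl.le
  have hup := firstPassageGF_natCast_eq hs0 hs hr hsr (x := 1) hT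
  have hdown := firstPassageGF_natCast_eq hs0 hs hr hsr (x := T - 1) (Nat.sub_le T 1)
  rw [Nat.cast_one, pow_one] at hup
  rw [Nat.cast_sub hT, Nat.cast_one, Nat.sub_sub_self hT, pow_one, ← neg_add_eq_sub,
    firstPassageGF_add_period] at hdown
  have hpos : 0 < 1 + rho l ^ T := by positivity
  rw [hP.QT_eq_ofReal_firstPassageGF hl, hup, hdown, QTformula]
  congr 1
  field_simp
  ring

lemma phiInf_le_of_QT_eq (hδ : 0 < δ) (hT : 0 < T)
    (h : QT P X T l = ENNReal.ofReal (exp (-δ))) : phiInf δ ≤ l := by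
  by_contra! hlt
  have hmono := QT_antitone P X T hlt.le
  rw [h, hP.QT_eq_ofReal_QTformula (phiInf_pos hδ) hT,
    ENNReal.ofReal_le_ofReal_iff (exp_pos _).le] at hmono
  have hgt := Qinf_lt_QTformula (phiInf_pos hδ) hT
  rw [Qinf_phiInf hδ.le] at hgt
  linarith

lemma exp_neg_two_mul_phiInf_sub_le_of_QT_eq (hδ : 0 < δ) (hT : 0 < T)
    (h : QT P X T l = ENNReal.ofReal (exp (-δ))) :
    exp (-(2 * phiInf δ)) - exp (-(2 * l)) ≤ 2 * rho (phiInf δ) ^ (T - 1) := by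
  have hφ := phiInf_pos hδ
  have hle := hP.phiInf_le_of_QT_eq hδ hT h
  have hl := hφ.trans_le hle
  have hformula : QTformula l T = exp (-δ) := by
    rw [hP.QT_eq_ofReal_QTformula hl hT] at h
    exact (ENNReal.ofReal_eq_ofReal_iff (QTformula_pos hl.le T).le (exp_pos _).le).1 h
  calc exp (-(2 * phiInf δ)) - exp (-(2 * l)) ≤ 2 * (Qinf (phiInf δ) - Qinf l) := by
        linarith [Qinf_sub_Qinf_ge hφ.le hle]
    _ = 2 * (QTformula l T - Qinf l) := by rw [Qinf_phiInf hδ.le, hformula]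
    _ ≤ 2 * rho l ^ (T - 1) := by linarith [QTformula_le_Qinf_add hl hT]
    _ ≤ 2 * rho (phiInf δ) ^ (T - 1) := by
        gcongr
        · exact (rho_pos hl.le).le
        · exact rho_antitoneOn hφ.le hl.le hle

lemma abs_sub_phiInf_le_of_QT_eq (hδ : 0 < δ) (hT : 0 < T)
    (h : QT P X T l = ENNReal.ofReal (exp (-δ)))
    (hsmall : 4 * exp (2 * phiInf δ) * rho (phiInf δ) ^ (T - 1) ≤ 1) :
    |l - phiInf δ| ≤ 2 * exp (2 * phiInf δ) * rho (phiInf δ) ^ (T - 1) := by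
  have hle := hP.phiInf_le_of_QT_eq hδ hT h
  have hgap := hP.exp_neg_two_mul_phiInf_sub_le_of_QT_eq hδ hT h
  have hcancel : exp (-(2 * phiInf δ)) * exp (2 * phiInf δ) = 1 := by
    rw [← exp_add, neg_add_cancel, exp_zero]
  rw [abs_of_nonneg (sub_nonneg.2 hle)]
  refine le_of_one_sub_le_exp_neg_two_mul (sub_nonneg.2 hle) (by linarith) ?_
  rw [show -(2 * (l - phiInf δ)) = -(2 * l) + 2 * phiInf δ by ring, exp_add]
  nlinarith [mul_le_mul_of_nonneg_right hgap (exp_pos (2 * phiInf δ)).le]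

lemma eventually_abs_sub_phiInf_le (hδ : 0 < δ) :
    ∀ᶠ T : ℕ in atTop, ∀ l, 0 < T → QT P X T l = ENNReal.ofReal (exp (-δ)) →
      |l - phiInf δ| ≤ 2 * exp (2 * phiInf δ) / rho (phiInf δ) * rho (phiInf δ) ^ T := by
  have hρ0 := rho_pos (phiInf_pos hδ).le
  have hlim := ((tendsto_pow_atTop_nhds_zero_of_lt_one hρ0.le (rho_lt_one (phiInf_pos hδ))).comp
    (tendsto_sub_atTop_nat 1)).const_mul (4 * exp (2 * phiInf δ))
  rw [mul_zero] at hlim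
  filter_upwards [hlim.eventually (ge_mem_nhds zero_lt_one)] with T hsmall l hT h
  obtain ⟨m, rfl⟩ : ∃ m, T = m + 1 := ⟨T - 1, by omega⟩
  calc |l - phiInf δ| ≤ 2 * exp (2 * phiInf δ) * rho (phiInf δ) ^ m :=
        hP.abs_sub_phiInf_le_of_QT_eq hδ hT h hsmall
    _ = _ := by rw [pow_succ]; field_simp

end IsSRW

end Laplace

/-- `|φ(δ,T) - φ(δ,∞)| ≤ C e^{-κT}` for large even `T`; in particular
`φ(δ,T) - φ(δ,∞) = o(1/T)` as `T → ∞` along even integers. -/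
theorem phi_exponential_convergence
    {Ω : Type*} [MeasurableSpace Ω] (P : Measure Ω) (X : ℕ → Ω → ℤ) (hP : IsSRW P X)
    (δ : ℝ) (hδ : 0 < δ) (lamT : ℕ → ℝ)
    (hsolT : ∀ T : ℕ, Even T → 0 < T →
      QT P X T (lamT T) = ENNReal.ofReal (Real.exp (-δ))) :
    (∃ κ : ℝ, 0 < κ ∧ ∃ C : ℝ, 0 < C ∧ ∀ᶠ T : ℕ in atTop, Even T → 0 < T →
        |lamT T - phiInf δ| ≤ C * Real.exp (-κ * T)) ∧
    Tendsto (fun T : ℕ => (T : ℝ) * (lamT T - phiInf δ))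
      (atTop ⊓ Filter.principal {T | Even T ∧ 0 < T}) (𝓝 0) := by
  set ρ := rho (phiInf δ)
  have hρ0 : 0 < ρ := rho_pos (phiInf_pos hδ).le
  have hρ1 : ρ < 1 := rho_lt_one (phiInf_pos hδ)
  set C := 2 * exp (2 * phiInf δ) / ρ
  have hbound : ∀ᶠ T : ℕ in atTop, Even T → 0 < T → |lamT T - phiInf δ| ≤ C * ρ ^ T :=
    (hP.eventually_abs_sub_phiInf_le hδ).mono fun T hT hev hT0 => hT _ hT0 (hsolT T hev hT0)
  refine ⟨⟨-log ρ, neg_pos.2 (log_neg hρ0 hρ1), C, by positivity, ?_⟩, ?_⟩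
  · have hexp (T : ℕ) : exp (-(-log ρ) * T) = ρ ^ T := by
      rw [neg_neg, mul_comm, exp_nat_mul, exp_log hρ0]
    simpa only [hexp] using hbound
  · have hlim := (tendsto_self_mul_const_pow_of_lt_one hρ0.le hρ1).const_mul C
    rw [mul_zero] at hlim
    refine squeeze_zero_norm' ?_ (hlim.mono_left inf_le_left)
    rw [eventually_inf_principal]
    filter_upwards [hbound] with T hT ⟨hev, hT0⟩
    rw [norm_mul, Real.norm_natCast, Real.norm_eq_abs, mul_left_comm]
    exact mul_le_mul_of_nonneg_left (hT hev hT0) (Nat.cast_nonneg T)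

end
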